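/- arXiv:1605.00277 — 8 statements merged into one kernel-verified Lean document; each statement's English description precedes it below -/
import Mathlib

section
/- Define Θ_n(t) for t ∈ [0,1] to be the volume of the region in [1,e]^n consisting of points whose coordinates have product at most e^t. Then Θ_{n+1}(t) + Θ_n(t) = e^t t^n / n! for all n ≥ 1. -/
open MeasureTheory Real Finset

namespace Stmt2Aux

/-- The region. -/
def S (n : ℕ) (s : ℝ) : Set (Fin n → ℝ) :=
  {x | (∀ i, x i ∈ Set.Icc (1:ℝ) (Real.exp 1)) ∧ ∏ i, x i ≤ Real.exp s}

/-- Closed form. -/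
noncomputable def g (n : ℕ) (s : ℝ) : ℝ :=
  (-1)^n + ∑ k ∈ Finset.range n, (-1)^(n+k+1) * Real.exp s * s^k / k.factorial

lemma measurableSet_S (n : ℕ) (s : ℝ) : MeasurableSet (S n s) := by
  have h1 : MeasurableSet {x : Fin n → ℝ | ∀ i, x i ∈ Set.Icc (1:ℝ) (Real.exp 1)} := by
    rw [Set.setOf_forall]
    exact MeasurableSet.iInter fun i =>
      (measurable_pi_apply i) measurableSet_Icc
  have h2 : MeasurableSet {x : Fin n → ℝ | ∏ i, x i ≤ Real.exp s} :=
    measurableSet_le (Finset.measurable_prod _ fun i _ => measurable_pi_apply i)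
      measurable_const
  exact h1.inter h2

lemma S_empty {n : ℕ} {s : ℝ} (hs : s < 0) : S n s = ∅ := by
  ext x
  simp only [S, Set.mem_setOf_eq, Set.mem_empty_iff_false, iff_false, not_and]
  intro hx
  have h1 : (1:ℝ) ≤ ∏ i, x i := by
    calc (1:ℝ) = ∏ i : Fin n, 1 := by simp
    _ ≤ ∏ i, x i := Finset.prod_le_prod (by simp) (fun i _ => (hx i).1)
  have : Real.exp s < 1 := by simpa using Real.exp_lt_exp.2 hs
  linarith

lemma volume_S_zero {s : ℝ} (hs : 0 ≤ s) : volume (S 0 s) = 1 := by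
  have : S 0 s = Set.univ := by
    ext x
    simp [S, Real.one_le_exp_iff, hs]
  rw [this]
  simp [volume_pi, Measure.pi_univ]

lemma recurrence (n : ℕ) (s : ℝ) :
    volume (S (n+1) s) = ∫⁻ x in Set.Icc (1:ℝ) (Real.exp 1), volume (S n (s - Real.log x)) := by
  set e : (Fin (n+1) → ℝ) ≃ᵐ ℝ × (Fin n → ℝ) :=
    MeasurableEquiv.piFinSuccAbove (fun _ : Fin (n+1) => ℝ) 0 with he
  have hmp : MeasurePreserving e.symm ((volume : Measure ℝ).prod (volume : Measure (Fin n → ℝ)))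
      (volume : Measure (Fin (n+1) → ℝ)) :=
    (MeasureTheory.volume_preserving_piFinSuccAbove (fun _ : Fin (n+1) => ℝ) 0).symm e
  have hvol : volume (S (n+1) s)
      = ((volume : Measure ℝ).prod (volume : Measure (Fin n → ℝ))) (e.symm ⁻¹' (S (n+1) s)) :=
    (hmp.measure_preimage (measurableSet_S (n+1) s).nullMeasurableSet).symm
  have hpre : e.symm ⁻¹' (S (n+1) s) = {p : ℝ × (Fin n → ℝ) |
      p.1 ∈ Set.Icc (1:ℝ) (Real.exp 1) ∧ p.2 ∈ S n (s - Real.log p.1)} := by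
    ext ⟨a, y⟩
    simp only [Set.mem_preimage, S, Set.mem_setOf_eq, he,
      MeasurableEquiv.piFinSuccAbove_symm_apply, Fin.insertNthEquiv, Equiv.coe_fn_mk, Fin.insertNth_zero, Fin.forall_fin_succ,
      Fin.cons_zero, Fin.cons_succ, Fin.prod_cons, Fin.prod_univ_succ, cast_eq]
    constructor
    · rintro ⟨⟨ha, hy⟩, hp⟩
      refine ⟨ha, hy, ?_⟩
      have ha0 : (0:ℝ) < a := lt_of_lt_of_le one_pos ha.1
      rw [Real.exp_sub, Real.exp_log ha0, le_div_iff₀ ha0]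
      nlinarith [hp]
    · rintro ⟨ha, hy, hp⟩
      have ha0 : (0:ℝ) < a := lt_of_lt_of_le one_pos ha.1
      rw [Real.exp_sub, Real.exp_log ha0, le_div_iff₀ ha0] at hp
      exact ⟨⟨ha, hy⟩, by nlinarith⟩
  have hmeas : MeasurableSet (e.symm ⁻¹' (S (n+1) s)) :=
    e.symm.measurable (measurableSet_S (n+1) s)
  rw [hvol, Measure.prod_apply hmeas,
    ← lintegral_indicator measurableSet_Icc (fun a => volume (S n (s - Real.log a)))]
  apply lintegral_congr
  intro a
  rw [hpre]
  by_cases ha : a ∈ Set.Icc (1:ℝ) (Real.exp 1)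
  · rw [Set.indicator_of_mem ha]
    congr 1
    ext y
    simp only [Set.mem_preimage, Set.mem_setOf_eq]
    exact ⟨fun h => h.2, fun h => ⟨ha, h⟩⟩
  · rw [Set.indicator_of_notMem ha]
    have h0 : (Prod.mk a ⁻¹' {p : ℝ × (Fin n → ℝ) |
        p.1 ∈ Set.Icc (1:ℝ) (Real.exp 1) ∧ p.2 ∈ S n (s - Real.log p.1)})
        = (∅ : Set (Fin n → ℝ)) := by
      ext y
      simp only [Set.mem_preimage, Set.mem_setOf_eq, Set.mem_empty_iff_false, iff_false]
      rintro ⟨h1, -⟩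
      exact ha h1
    rw [h0]
    exact measure_empty


lemma continuous_g (n : ℕ) : Continuous (g n) := by
  unfold g
  refine continuous_const.add (continuous_finset_sum _ fun k _ => ?_)
  exact ((continuous_const.mul Real.continuous_exp).mul (continuous_pow k)).div_const _

lemma continuousOn_integrand (n : ℕ) (s : ℝ) {A : Set ℝ} (hA : A ⊆ Set.Ici (1:ℝ)) :
    ContinuousOn (fun x => g n (s - Real.log x)) A := by
  refine (continuous_g n).comp_continuousOn ?_
  refine continuousOn_const.sub (Real.continuousOn_log.mono ?_)
  intro x hx
  have := hA hx
  simp only [Set.mem_compl_iff, Set.mem_singleton_iff]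
  intro h
  rw [h] at this
  exact absurd this (by norm_num)

lemma g_succ_eq_integral (n : ℕ) (s : ℝ) (hs : 0 ≤ s) :
    ∫ x in Set.Icc (1:ℝ) (Real.exp s), g n (s - Real.log x) = g (n+1) s := by
  have h1e : (1:ℝ) ≤ Real.exp s := Real.one_le_exp hs
  set F : ℝ → ℝ := fun x => (-1:ℝ)^n * x +
    ∑ k ∈ Finset.range n, (-1:ℝ)^(n+k) * Real.exp s * (s - Real.log x)^(k+1) / (k+1).factorial
    with hF
  have hderiv : ∀ x ∈ Set.uIcc (1:ℝ) (Real.exp s),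
      HasDerivAt F (g n (s - Real.log x)) x := by
    intro x hx
    rw [Set.uIcc_of_le h1e] at hx
    have hx0 : (0:ℝ) < x := lt_of_lt_of_le one_pos hx.1
    have hlog : HasDerivAt (fun y => s - Real.log y) (-x⁻¹) x :=
      (Real.hasDerivAt_log hx0.ne').const_sub s
    have hterm : ∀ k : ℕ, HasDerivAt
        (fun y => (-1:ℝ)^(n+k) * Real.exp s * (s - Real.log y)^(k+1) / (k+1).factorial)
        ((-1:ℝ)^(n+k) * Real.exp s * (((k:ℝ)+1) * (s - Real.log x)^k * (-x⁻¹)) / (k+1).factorial)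
        x := by
      intro k
      have h1 := hlog.pow (k+1)
      push_cast [Nat.add_sub_cancel] at h1
      simpa using (h1.const_mul ((-1:ℝ)^(n+k) * Real.exp s)).div_const ((k+1).factorial : ℝ)
    have hsum : HasDerivAt F
        ((-1:ℝ)^n * 1 + ∑ k ∈ Finset.range n,
          (-1:ℝ)^(n+k) * Real.exp s * (((k:ℝ)+1) * (s - Real.log x)^k * (-x⁻¹)) / (k+1).factorial)
        x := by
      refine HasDerivAt.add ?_ (HasDerivAt.fun_sum fun k _ => hterm k)
      simpa using (hasDerivAt_id x).const_mul ((-1:ℝ)^n)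
    convert hsum using 1
    rw [g]
    have hexp : Real.exp (s - Real.log x) = Real.exp s / x := by
      rw [Real.exp_sub, Real.exp_log hx0]
    rw [hexp, mul_one]
    congr 1
    refine Finset.sum_congr rfl fun k _ => ?_
    have hf : ((k+1).factorial : ℝ) = (k+1) * k.factorial := by
      push_cast [Nat.factorial_succ]; ring
    have hk0 : (0:ℝ) < k.factorial := by positivity
    rw [pow_succ, hf]
    field_simp
  have hint : IntervalIntegrable (fun x => g n (s - Real.log x)) volume 1 (Real.exp s) := by
    refine ContinuousOn.intervalIntegrable ?_
    refine continuousOn_integrand n s ?_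
    rw [Set.uIcc_of_le h1e]
    exact fun x hx => hx.1
  have hFTC := intervalIntegral.integral_eq_sub_of_hasDerivAt hderiv hint
  rw [MeasureTheory.integral_Icc_eq_integral_Ioc,
    ← intervalIntegral.integral_of_le h1e, hFTC]
  have hFes : F (Real.exp s) = (-1:ℝ)^n * Real.exp s := by
    rw [hF]
    simp [Real.log_exp]
  have hF1 : F 1 = (-1:ℝ)^n +
      ∑ k ∈ Finset.range n, (-1:ℝ)^(n+k) * Real.exp s * s^(k+1) / (k+1).factorial := by
    rw [hF]
    simp [Real.log_one]
  rw [hFes, hF1, g, Finset.sum_range_succ']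
  have hterm2 : ∀ k : ℕ, (-1:ℝ)^(n+1+(k+1)+1) * Real.exp s * s^(k+1) / (k+1).factorial
      = -((-1:ℝ)^(n+k) * Real.exp s * s^(k+1) / (k+1).factorial) := by
    intro k
    rw [show n+1+(k+1)+1 = (n+k)+3 from by ring, pow_add]
    ring
  rw [Finset.sum_congr rfl fun k _ => hterm2 k, Finset.sum_neg_distrib]
  simp only [pow_zero, Nat.factorial_zero, Nat.cast_one, mul_one, div_one]
  rw [show n+1+0+1 = n+2 from by ring, show n+1 = n+1 from rfl, pow_add, pow_add]
  ring

lemma key (n : ℕ) : ∀ s ∈ Set.Icc (0:ℝ) 1,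
    0 ≤ g n s ∧ volume (S n s) = ENNReal.ofReal (g n s) := by
  induction n with
  | zero =>
    intro s hs
    have hg : g 0 s = 1 := by simp [g]
    rw [hg, volume_S_zero hs.1]
    simp
  | succ n ih =>
    intro s hs
    have hes1 : Real.exp s ≤ Real.exp 1 := Real.exp_le_exp.2 hs.2
    have h1es : (1:ℝ) ≤ Real.exp s := Real.one_le_exp hs.1
    have harg : ∀ x ∈ Set.Icc (1:ℝ) (Real.exp s), s - Real.log x ∈ Set.Icc (0:ℝ) 1 := by
      intro x hx
      have hx0 : (0:ℝ) < x := lt_of_lt_of_le one_pos hx.1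
      have hlog : Real.log x ≤ s := (Real.log_le_iff_le_exp hx0).2 hx.2
      have hlog0 : 0 ≤ Real.log x := Real.log_nonneg hx.1
      exact ⟨by linarith, by linarith [hs.2]⟩
    have hptwise : ∀ x ∈ Set.Icc (1:ℝ) (Real.exp 1),
        volume (S n (s - Real.log x)) = Set.indicator (Set.Icc (1:ℝ) (Real.exp s))
          (fun x => ENNReal.ofReal (g n (s - Real.log x))) x := by
      intro x hx
      by_cases hxe : x ≤ Real.exp s
      · rw [Set.indicator_of_mem (Set.mem_Icc.2 ⟨hx.1, hxe⟩)]
        exact (ih (s - Real.log x) (harg x (Set.mem_Icc.2 ⟨hx.1, hxe⟩))).2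
      · rw [Set.indicator_of_notMem (fun h => hxe h.2)]
        have hx0 : (0:ℝ) < x := lt_of_lt_of_le one_pos hx.1
        have : s < Real.log x := (Real.lt_log_iff_exp_lt hx0).2 (not_le.1 hxe)
        rw [S_empty (by linarith)]
        exact measure_empty
    have hrec := recurrence n s
    rw [MeasureTheory.setLIntegral_congr_fun measurableSet_Icc
      hptwise] at hrec
    rw [lintegral_indicator measurableSet_Icc,
      Measure.restrict_restrict measurableSet_Icc,
      Set.inter_eq_self_of_subset_left (Set.Icc_subset_Icc le_rfl hes1)] at hrec
    have hintg : IntegrableOn (fun x => g n (s - Real.log x))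
        (Set.Icc (1:ℝ) (Real.exp s)) volume := by
      refine ContinuousOn.integrableOn_Icc ?_
      exact continuousOn_integrand n s (fun x hx => hx.1)
    have hnn : 0 ≤ᵐ[volume.restrict (Set.Icc (1:ℝ) (Real.exp s))]
        fun x => g n (s - Real.log x) := by
      refine (MeasureTheory.ae_restrict_iff' measurableSet_Icc).2 (MeasureTheory.ae_of_all _ ?_)
      intro x hx
      exact (ih (s - Real.log x) (harg x hx)).1
    rw [← MeasureTheory.ofReal_integral_eq_lintegral_ofReal hintg hnn] at hrec
    rw [g_succ_eq_integral n s hs.1] at hrec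
    have hg0 : 0 ≤ g (n+1) s := by
      rw [← g_succ_eq_integral n s hs.1]
      refine MeasureTheory.setIntegral_nonneg measurableSet_Icc ?_
      intro x hx
      exact (ih (s - Real.log x) (harg x hx)).1
    exact ⟨hg0, hrec⟩

end Stmt2Aux

open Stmt2Aux in
theorem stmt_2 (n : ℕ) (hn : 1 ≤ n) (t : ℝ) (ht : t ∈ Set.Icc (0:ℝ) 1)
    (Θ : ℕ → ENNReal)
    (hΘ : ∀ m : ℕ, Θ m = volume {x : Fin m → ℝ |
      (∀ i, x i ∈ Set.Icc (1:ℝ) (Real.exp 1)) ∧ ∏ i, x i ≤ Real.exp t}) :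
    Θ (n + 1) + Θ n = ENNReal.ofReal (Real.exp t * t ^ n / n.factorial) := by
  obtain ⟨hg1, hv1⟩ := key (n+1) t ht
  obtain ⟨hg2, hv2⟩ := key n t ht
  have hA : Θ (n+1) = volume (S (n+1) t) := hΘ (n+1)
  have hB : Θ n = volume (S n t) := hΘ n
  rw [hA, hB, hv1, hv2, ← ENNReal.ofReal_add hg1 hg2]
  congr 1
  rw [g, g, Finset.sum_range_succ]
  have hcancel : ∀ k : ℕ, (-1:ℝ)^(n+1+k+1) * Real.exp t * t^k / k.factorial
      + (-1:ℝ)^(n+k+1) * Real.exp t * t^k / k.factorial = 0 := by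
    intro k
    rw [show n+1+k+1 = (n+k+1)+1 from by ring, pow_succ]
    ring
  have hone : ((-1:ℝ))^(n+1+n+1) = 1 := by
    rw [show n+1+n+1 = 2*(n+1) from by ring, pow_mul]
    norm_num
  have hsum : (∑ k ∈ Finset.range n, (-1:ℝ)^(n+1+k+1) * Real.exp t * t^k / k.factorial)
      + ∑ k ∈ Finset.range n, (-1:ℝ)^(n+k+1) * Real.exp t * t^k / k.factorial = 0 := by
    rw [← Finset.sum_add_distrib]
    exact Finset.sum_eq_zero fun k _ => hcancel k
  rw [hone, pow_succ]
  linear_combination hsum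
end

section
/- Let b_n(t) = ∑_{k=0}^{n-1} (-t)^k / k! be the n-th partial sum of the Taylor series of e^{-t}. For t ∈ [0,1] and n ≥ 1, the volume Θ_n(t) of {(x_1,...,x_n) ∈ [1,e]^n : x_1 ⋯ x_n ≤ e^t} equals (-1)^n (1 - b_n(t) e^t). -/
open MeasureTheory

noncomputable def Gf (n : ℕ) (t : ℝ) : ℝ :=
  (-1) ^ n * (1 - (∑ k ∈ Finset.range n, (-t) ^ k / k.factorial) * Real.exp t)

lemma Gf_cont (n : ℕ) : Continuous (Gf n) := by
  unfold Gf
  fun_prop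

lemma key_int (k : ℕ) (t : ℝ) :
    ∫ u in (1:ℝ)..Real.exp t, (Real.log u - t) ^ k / u = -(-t) ^ (k + 1) / (k + 1) := by
  have hpos : ∀ u ∈ Set.uIcc (1:ℝ) (Real.exp t), 0 < u := by
    intro u hu
    have := hu.1
    have h2 : (0:ℝ) < min 1 (Real.exp t) := lt_min one_pos (Real.exp_pos t)
    exact lt_of_lt_of_le h2 this
  have hderiv : ∀ u ∈ Set.uIcc (1:ℝ) (Real.exp t),
      HasDerivAt (fun u => (Real.log u - t) ^ (k + 1) / (k + 1))
        ((Real.log u - t) ^ k / u) u := by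
    intro u hu
    have hu0 := hpos u hu
    have h1 : HasDerivAt (fun u => Real.log u - t) u⁻¹ u :=
      (Real.hasDerivAt_log hu0.ne').sub_const t
    have h2 := (h1.pow (k + 1)).div_const ((k : ℝ) + 1)
    refine h2.congr_deriv ?_
    push_cast
    field_simp
  have hcont : ContinuousOn (fun u => (Real.log u - t) ^ k / u)
      (Set.uIcc 1 (Real.exp t)) := by
    apply ContinuousOn.div
    · exact ((Real.continuousOn_log.mono (fun u hu => (hpos u hu).ne')).sub
        continuousOn_const).pow k
    · exact continuousOn_id
    · exact fun u hu => (hpos u hu).ne'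
  rw [intervalIntegral.integral_eq_sub_of_hasDerivAt hderiv
    (hcont.intervalIntegrable)]
  simp [Real.log_exp, Real.log_one]
  ring

lemma term_cont (k : ℕ) (t : ℝ) : ContinuousOn
    (fun u => (Real.log u - t) ^ k / (k.factorial : ℝ) / u)
    (Set.uIcc 1 (Real.exp t)) := by
  have hpos : ∀ u ∈ Set.uIcc (1:ℝ) (Real.exp t), 0 < u := by
    intro u hu
    exact lt_of_lt_of_le (lt_min one_pos (Real.exp_pos t)) hu.1
  apply ContinuousOn.div
  · exact (((Real.continuousOn_log.mono (fun u hu => (hpos u hu).ne')).sub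
      continuousOn_const).pow k).div_const _
  · exact continuousOn_id
  · exact fun u hu => (hpos u hu).ne'

lemma key_int' (k : ℕ) (t : ℝ) :
    ∫ u in (1:ℝ)..Real.exp t, (Real.log u - t) ^ k / (k.factorial : ℝ) / u
      = -(-t) ^ (k + 1) / ((k + 1).factorial : ℝ) := by
  have h : (fun u => (Real.log u - t) ^ k / (k.factorial : ℝ) / u)
      = fun u => ((k.factorial : ℝ))⁻¹ * ((Real.log u - t) ^ k / u) := by
    funext u; ring
  rw [h, intervalIntegral.integral_const_mul, key_int]
  have h1 : ((k.factorial : ℝ)) ≠ 0 := Nat.cast_ne_zero.2 k.factorial_ne_zero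
  have h2 : ((k : ℝ) + 1) ≠ 0 := by positivity
  have h3 : (((k + 1).factorial : ℕ) : ℝ) = ((k : ℝ) + 1) * (k.factorial : ℝ) := by
    rw [Nat.factorial_succ]; push_cast; ring
  rw [h3]
  field_simp
  try ring
  try trivial

lemma Gf_rec (n : ℕ) (t : ℝ) :
    ∫ u in (1:ℝ)..Real.exp t, Gf n (t - Real.log u) = Gf (n + 1) t := by
  have hpos : ∀ u ∈ Set.uIcc (1:ℝ) (Real.exp t), 0 < u := by
    intro u hu
    exact lt_of_lt_of_le (lt_min one_pos (Real.exp_pos t)) hu.1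
  have heq : Set.EqOn (fun u => Gf n (t - Real.log u))
      (fun u => (-1:ℝ) ^ n - ((-1) ^ n * Real.exp t) *
        ∑ k ∈ Finset.range n, (Real.log u - t) ^ k / (k.factorial : ℝ) / u)
      (Set.uIcc 1 (Real.exp t)) := by
    intro u hu
    have hu0 := hpos u hu
    simp only [Gf]
    have hexp : Real.exp (t - Real.log u) = Real.exp t / u := by
      rw [Real.exp_sub, Real.exp_log hu0]
    rw [hexp]
    simp only [neg_sub]
    have hdiv : ∑ k ∈ Finset.range n, (Real.log u - t) ^ k / (k.factorial : ℝ) / u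
        = (∑ k ∈ Finset.range n, (Real.log u - t) ^ k / (k.factorial : ℝ)) / u := by
      rw [Finset.sum_div]
    rw [hdiv]
    field_simp
  rw [intervalIntegral.integral_congr heq]
  have hint : ∀ k ∈ Finset.range n, IntervalIntegrable
      (fun u => (Real.log u - t) ^ k / (k.factorial : ℝ) / u) volume 1 (Real.exp t) :=
    fun k _ => (term_cont k t).intervalIntegrable
  have I2 : IntervalIntegrable
      (fun u => ∑ k ∈ Finset.range n, (Real.log u - t) ^ k / (k.factorial : ℝ) / u)
      volume 1 (Real.exp t) :=
    (continuousOn_finset_sum _ fun k _ => term_cont k t).intervalIntegrable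
  rw [intervalIntegral.integral_sub (intervalIntegrable_const) (I2.const_mul _)]
  rw [intervalIntegral.integral_const, intervalIntegral.integral_const_mul,
    intervalIntegral.integral_finset_sum hint]
  have hsum : ∑ k ∈ Finset.range n,
      ∫ u in (1:ℝ)..Real.exp t, (Real.log u - t) ^ k / (k.factorial : ℝ) / u
      = ∑ k ∈ Finset.range n, -(-t) ^ (k + 1) / ((k + 1).factorial : ℝ) := by
    exact Finset.sum_congr rfl fun k _ => key_int' k t
  rw [hsum]
  have hS := Finset.sum_range_succ' (fun k => (-t) ^ k / (k.factorial : ℝ)) n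
  have h0 : (-t : ℝ) ^ 0 / ((Nat.factorial 0 : ℕ) : ℝ) = 1 := by simp
  have hsum2 : ∑ k ∈ Finset.range n, -(-t) ^ (k + 1) / ((k + 1).factorial : ℝ)
      = 1 - ∑ k ∈ Finset.range (n + 1), (-t) ^ k / (k.factorial : ℝ) := by
    have hneg : ∀ k ∈ Finset.range n, -(-t) ^ (k + 1) / (((k + 1).factorial : ℕ) : ℝ)
        = -((-t) ^ (k + 1) / (((k + 1).factorial : ℕ) : ℝ)) := fun k _ => neg_div _ _
    rw [Finset.sum_congr rfl hneg, Finset.sum_neg_distrib, hS, h0]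
    ring
  rw [hsum2]
  simp only [Gf, smul_eq_mul]
  ring

lemma Gf_nonneg : ∀ n, 1 ≤ n → ∀ t ∈ Set.Icc (0:ℝ) 1, 0 ≤ Gf n t := by
  intro n hn
  induction n, hn using Nat.le_induction with
  | base =>
    intro t ht
    have : Gf 1 t = Real.exp t - 1 := by
      simp [Gf]
    rw [this]
    have := Real.one_le_exp ht.1
    linarith
  | succ n hn ih =>
    intro t ht
    rw [← Gf_rec n t]
    apply intervalIntegral.integral_nonneg (Real.one_le_exp ht.1)
    intro u hu
    apply ih
    have hu1 : (1:ℝ) ≤ u := hu.1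
    have hlog1 : 0 ≤ Real.log u := Real.log_nonneg hu1
    have hlog2 : Real.log u ≤ t := by
      have := Real.log_le_log (by linarith) hu.2
      rwa [Real.log_exp] at this
    constructor
    · linarith
    · linarith [ht.2]

lemma measS (n : ℕ) (t : ℝ) : MeasurableSet {x : Fin n → ℝ |
    (∀ i, x i ∈ Set.Icc (1:ℝ) (Real.exp 1)) ∧ ∏ i, x i ≤ Real.exp t} := by
  have h1 : MeasurableSet {x : Fin n → ℝ | ∀ i, x i ∈ Set.Icc (1:ℝ) (Real.exp 1)} := by
    have : {x : Fin n → ℝ | ∀ i, x i ∈ Set.Icc (1:ℝ) (Real.exp 1)}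
        = ⋂ i, (fun x : Fin n → ℝ => x i) ⁻¹' Set.Icc (1:ℝ) (Real.exp 1) := by
      ext x; simp [Set.mem_iInter]
    rw [this]
    exact MeasurableSet.iInter fun i => (measurable_pi_apply i) measurableSet_Icc
  have h2 : MeasurableSet {x : Fin n → ℝ | ∏ i, x i ≤ Real.exp t} := by
    have hm : Measurable fun x : Fin n → ℝ => ∏ i, x i :=
      Finset.measurable_prod _ fun i _ => measurable_pi_apply i
    exact hm measurableSet_Iic
  exact h1.inter h2

lemma main_lemma : ∀ n, 1 ≤ n → ∀ t ∈ Set.Icc (0:ℝ) 1,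
    volume {x : Fin n → ℝ |
        (∀ i, x i ∈ Set.Icc (1:ℝ) (Real.exp 1)) ∧ ∏ i, x i ≤ Real.exp t}
      = ENNReal.ofReal (Gf n t) := by
  intro n hn
  induction n, hn using Nat.le_induction with
  | base =>
    intro t ht
    have hE : Real.exp t ≤ Real.exp 1 := Real.exp_le_exp.2 ht.2
    have hpres := (MeasureTheory.volume_preserving_funUnique (Fin 1) ℝ).symm
    erw [← hpres.measure_preimage (measS 1 t).nullMeasurableSet]
    have hset : (MeasurableEquiv.funUnique (Fin 1) ℝ).symm ⁻¹'
        {x : Fin 1 → ℝ | (∀ i, x i ∈ Set.Icc (1:ℝ) (Real.exp 1)) ∧ ∏ i, x i ≤ Real.exp t}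
        = Set.Icc 1 (Real.exp t) := by
      ext r
      simp only [Set.mem_preimage, Set.mem_setOf_eq, MeasurableEquiv.funUnique_symm_apply]
      constructor
      · rintro ⟨h1, h2⟩
        have := h1 0
        simp at h2
        exact ⟨this.1, h2⟩
      · rintro ⟨h1, h2⟩
        refine ⟨fun i => ⟨h1, le_trans h2 hE⟩, by simpa⟩
    rw [hset, Real.volume_Icc]
    congr 1
    simp [Gf]
  | succ n hn ih =>
    intro t ht
    have hE : Real.exp t ≤ Real.exp 1 := Real.exp_le_exp.2 ht.2
    have h1e : (1:ℝ) ≤ Real.exp t := Real.one_le_exp ht.1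
    have hpres := (MeasureTheory.volume_preserving_piFinSuccAbove
      (fun _ : Fin (n + 1) => ℝ) 0).symm
    rw [← hpres.measure_preimage (measS (n + 1) t).nullMeasurableSet]
    have hset : (MeasurableEquiv.piFinSuccAbove (fun _ : Fin (n + 1) => ℝ) 0).symm ⁻¹'
        {x : Fin (n + 1) → ℝ |
          (∀ i, x i ∈ Set.Icc (1:ℝ) (Real.exp 1)) ∧ ∏ i, x i ≤ Real.exp t}
        = {p : ℝ × (Fin n → ℝ) |
            (p.1 ∈ Set.Icc (1:ℝ) (Real.exp 1) ∧ ∀ j, p.2 j ∈ Set.Icc (1:ℝ) (Real.exp 1))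
              ∧ p.1 * ∏ j, p.2 j ≤ Real.exp t} := by
      ext p
      simp only [Set.mem_preimage, Set.mem_setOf_eq,
        MeasurableEquiv.piFinSuccAbove_symm_apply]
      rw [Fin.forall_iff_succAbove (0 : Fin (n + 1)),
        Fin.prod_univ_succAbove _ (0 : Fin (n + 1))]
      simp [Fin.insertNth_apply_same, Fin.insertNth_apply_succAbove]
    have hTmeas : MeasurableSet {p : ℝ × (Fin n → ℝ) |
        (p.1 ∈ Set.Icc (1:ℝ) (Real.exp 1) ∧ ∀ j, p.2 j ∈ Set.Icc (1:ℝ) (Real.exp 1))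
          ∧ p.1 * ∏ j, p.2 j ≤ Real.exp t} :=
      hset ▸ ((MeasurableEquiv.piFinSuccAbove (fun _ : Fin (n + 1) => ℝ) 0).symm.measurable
        (measS (n + 1) t))
    rw [hset, MeasureTheory.Measure.volume_eq_prod, MeasureTheory.Measure.prod_apply hTmeas]
    have hslice : ∀ u : ℝ, volume (Prod.mk u ⁻¹' {p : ℝ × (Fin n → ℝ) |
        (p.1 ∈ Set.Icc (1:ℝ) (Real.exp 1) ∧ ∀ j, p.2 j ∈ Set.Icc (1:ℝ) (Real.exp 1))
          ∧ p.1 * ∏ j, p.2 j ≤ Real.exp t})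
        = Set.indicator (Set.Icc 1 (Real.exp t))
            (fun u => ENNReal.ofReal (Gf n (t - Real.log u))) u := by
      intro u
      by_cases hu : u ∈ Set.Icc (1:ℝ) (Real.exp t)
      · rw [Set.indicator_of_mem hu]
        have hu0 : (0:ℝ) < u := lt_of_lt_of_le one_pos hu.1
        have hlog1 : 0 ≤ Real.log u := Real.log_nonneg hu.1
        have hlog2 : Real.log u ≤ t := by
          have := Real.log_le_log hu0 hu.2
          rwa [Real.log_exp] at this
        have hsl : Prod.mk u ⁻¹' {p : ℝ × (Fin n → ℝ) |
            (p.1 ∈ Set.Icc (1:ℝ) (Real.exp 1) ∧ ∀ j, p.2 j ∈ Set.Icc (1:ℝ) (Real.exp 1))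
              ∧ p.1 * ∏ j, p.2 j ≤ Real.exp t}
            = {y : Fin n → ℝ | (∀ i, y i ∈ Set.Icc (1:ℝ) (Real.exp 1))
                ∧ ∏ i, y i ≤ Real.exp (t - Real.log u)} := by
          ext y
          simp only [Set.mem_preimage, Set.mem_setOf_eq]
          have hexp : Real.exp (t - Real.log u) = Real.exp t / u := by
            rw [Real.exp_sub, Real.exp_log hu0]
          rw [hexp]
          constructor
          · rintro ⟨⟨_, h2⟩, h3⟩
            refine ⟨h2, ?_⟩
            rw [le_div_iff₀ hu0, mul_comm]
            exact h3
          · rintro ⟨h2, h3⟩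
            refine ⟨⟨⟨hu.1, le_trans hu.2 hE⟩, h2⟩, ?_⟩
            rw [le_div_iff₀ hu0, mul_comm] at h3
            exact h3
        rw [hsl]
        exact ih (t - Real.log u) ⟨by linarith, by linarith [ht.2]⟩
      · rw [Set.indicator_of_notMem hu]
        have hempty : Prod.mk u ⁻¹' {p : ℝ × (Fin n → ℝ) |
            (p.1 ∈ Set.Icc (1:ℝ) (Real.exp 1) ∧ ∀ j, p.2 j ∈ Set.Icc (1:ℝ) (Real.exp 1))
              ∧ p.1 * ∏ j, p.2 j ≤ Real.exp t} = ∅ := by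
          apply Set.eq_empty_iff_forall_notMem.2
          intro y hy
          simp only [Set.mem_preimage, Set.mem_setOf_eq] at hy
          obtain ⟨⟨hu1, hy1⟩, hy2⟩ := hy
          apply hu
          refine ⟨hu1.1, ?_⟩
          have hprod : (1:ℝ) ≤ ∏ i, y i := by
            have := Finset.prod_le_prod (s := Finset.univ)
              (f := fun _ : Fin n => (1:ℝ)) (g := y)
              (fun i _ => by norm_num) (fun i _ => (hy1 i).1)
            simpa using this
          calc u = u * 1 := by ring
          _ ≤ u * ∏ i, y i := by
              apply mul_le_mul_of_nonneg_left hprod (by linarith [hu1.1])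
          _ ≤ Real.exp t := hy2
        rw [hempty, measure_empty]
    simp only [hslice]
    rw [MeasureTheory.lintegral_indicator measurableSet_Icc]
    have hcontOn : ContinuousOn (fun u => Gf n (t - Real.log u))
        (Set.Icc 1 (Real.exp t)) := by
      apply (Gf_cont n).comp_continuousOn
      apply continuousOn_const.sub
      apply Real.continuousOn_log.mono
      intro u hu
      exact ne_of_gt (lt_of_lt_of_le one_pos hu.1)
    have hInt : IntegrableOn (fun u => Gf n (t - Real.log u))
        (Set.Icc 1 (Real.exp t)) volume := hcontOn.integrableOn_Icc
    have hnn : 0 ≤ᵐ[volume.restrict (Set.Icc 1 (Real.exp t))]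
        (fun u => Gf n (t - Real.log u)) := by
      filter_upwards [MeasureTheory.ae_restrict_mem measurableSet_Icc] with u hu
      have hu0 : (0:ℝ) < u := lt_of_lt_of_le one_pos hu.1
      have hlog1 : 0 ≤ Real.log u := Real.log_nonneg hu.1
      have hlog2 : Real.log u ≤ t := by
        have := Real.log_le_log hu0 hu.2
        rwa [Real.log_exp] at this
      exact Gf_nonneg n hn _ ⟨by linarith, by linarith [ht.2]⟩
    rw [← MeasureTheory.ofReal_integral_eq_lintegral_ofReal hInt hnn]
    congr 1
    rw [MeasureTheory.integral_Icc_eq_integral_Ioc,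
      ← intervalIntegral.integral_of_le h1e, Gf_rec n t]

theorem stmt_3 (n : ℕ) (hn : 1 ≤ n) (t : ℝ) (ht : t ∈ Set.Icc (0:ℝ) 1) :
    volume {x : Fin n → ℝ |
        (∀ i, x i ∈ Set.Icc (1:ℝ) (Real.exp 1)) ∧ ∏ i, x i ≤ Real.exp t}
      = ENNReal.ofReal ((-1) ^ n *
          (1 - (∑ k ∈ Finset.range n, (-t) ^ k / k.factorial) * Real.exp t)) := by
  exact main_lemma n hn t ht
end

section
/- For t ∈ [0,1], the series ∑_{n=0}^∞ (-1)^n (1 - b_n(t) e^t) / (e-1)^n converges and equals (e-1)/e + e^{t - 1 + t/(e-1)}, where b_0(t) = 0 and b_n(t) = ∑_{k=0}^{n-1} (-t)^k / k! for n ≥ 1. -/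
theorem stmt_4 (t : ℝ) (ht : t ∈ Set.Icc (0:ℝ) 1) :
    HasSum (fun n : ℕ => (-1 : ℝ) ^ n *
        (1 - (∑ k ∈ Finset.range n, (-t) ^ k / k.factorial) * Real.exp t) /
        (Real.exp 1 - 1) ^ n)
      ((Real.exp 1 - 1) / Real.exp 1 + Real.exp (t - 1 + t / (Real.exp 1 - 1))) := by
  have he2 : (2:ℝ) < Real.exp 1 := by
    have := Real.exp_one_gt_d9; linarith
  set E : ℝ := Real.exp 1 - 1 with hE
  have hE1 : (1:ℝ) < E := by simp only [hE]; linarith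
  have hE0 : E ≠ 0 := by linarith
  have he0 : Real.exp 1 ≠ 0 := Real.exp_ne_zero 1
  set x : ℝ := -1 / E with hxdef
  have hx : ‖x‖ < 1 := by
    rw [hxdef, norm_div, norm_neg, norm_one, Real.norm_eq_abs, abs_of_pos (by linarith)]
    rw [div_lt_one (by linarith)]; exact hE1
  have hgeo : HasSum (fun n : ℕ => x ^ n) (1 - x)⁻¹ :=
    hasSum_geometric_of_norm_lt_one hx
  have hexp : HasSum (fun k : ℕ => (-t * x) ^ k / k.factorial) (Real.exp (-t * x)) := by
    rw [Real.exp_eq_exp_ℝ]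
    exact NormedSpace.expSeries_div_hasSum_exp (-t * x)
  have hf : Summable fun k : ℕ => ‖(-t * x) ^ k / (k.factorial : ℝ)‖ :=
    NormedSpace.norm_expSeries_div_summable (-t * x)
  have hg : Summable fun n : ℕ => ‖x ^ n‖ := by
    simp only [norm_pow]
    exact summable_geometric_of_lt_one (norm_nonneg x) hx
  have hcauchy := hasSum_sum_range_mul_of_summable_norm hf hg
  rw [hexp.tsum_eq, hgeo.tsum_eq] at hcauchy
  have hc : ∀ n : ℕ,
      (∑ k ∈ Finset.range (n + 1), (-t * x) ^ k / k.factorial * x ^ (n - k)) =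
        x ^ n * ∑ k ∈ Finset.range (n + 1), (-t) ^ k / k.factorial := by
    intro n
    rw [Finset.mul_sum]
    refine Finset.sum_congr rfl fun k hk => ?_
    rw [Finset.mem_range, Nat.lt_succ_iff] at hk
    rw [div_mul_eq_mul_div, mul_pow, mul_assoc, ← pow_add, Nat.add_sub_cancel' hk,
      mul_comm ((-t) ^ k), mul_div_assoc]
  simp only [hc] at hcauchy
  -- shift index: h n = x^n * b_n with b_0 = 0
  have hshift : HasSum
      (fun n : ℕ => x ^ n * ∑ k ∈ Finset.range n, (-t) ^ k / k.factorial)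
      (x * (Real.exp (-t * x) * (1 - x)⁻¹)) := by
    have h1 := hcauchy.mul_left x
    have h2 : HasSum (fun n : ℕ =>
        x ^ (n + 1) * ∑ k ∈ Finset.range (n + 1), (-t) ^ k / k.factorial)
        (x * (Real.exp (-t * x) * (1 - x)⁻¹)) := by
      refine h1.congr_fun fun n => ?_
      rw [pow_succ, mul_comm (x ^ n) x, mul_assoc]
    have := (hasSum_nat_add_iff (f := fun n : ℕ =>
        x ^ n * ∑ k ∈ Finset.range n, (-t) ^ k / k.factorial) 1).mp h2
    simpa using this
  have htotal := hgeo.add (hshift.mul_left (-Real.exp t))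
  have hfun : (fun n : ℕ => x ^ n + (-Real.exp t) *
      (x ^ n * ∑ k ∈ Finset.range n, (-t) ^ k / k.factorial)) =
      (fun n : ℕ => (-1 : ℝ) ^ n *
        (1 - (∑ k ∈ Finset.range n, (-t) ^ k / k.factorial) * Real.exp t) / E ^ n) := by
    funext n
    have hEn : E ^ n ≠ 0 := pow_ne_zero n hE0
    rw [hxdef, div_pow, neg_pow]
    field_simp
    ring
  rw [hfun] at htotal
  convert htotal using 1
  have h1x : 1 - x = Real.exp 1 / E := by
    rw [hxdef]; field_simp; linarith
  have htx : -t * x = t / E := by rw [hxdef]; ring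
  rw [h1x, htx, show t - 1 + t / E = t + t / E - 1 by ring, Real.exp_sub, Real.exp_add]
  rw [inv_div, hxdef]
  have hE0' : (-1 : ℝ) + Real.exp 1 ≠ 0 := by linarith
  field_simp
end

section
/- The double series identity: for t ∈ [0,1], -e^t ∑_{n=1}^∞ ((-1)^n/(e-1)^n) ∑_{k=0}^{n-1} (-t)^k/k! = (e^t / e) e^{t/(e-1)}. -/
theorem stmt_6 (t : ℝ) (ht : t ∈ Set.Icc (0:ℝ) 1) :
    -Real.exp t * ∑' n : ℕ, ((-1 : ℝ) ^ (n + 1) / (Real.exp 1 - 1) ^ (n + 1) *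
        ∑ k ∈ Finset.range (n + 1), (-t) ^ k / k.factorial)
      = (Real.exp t / Real.exp 1) * Real.exp (t / (Real.exp 1 - 1)) := by
  have he : (2:ℝ) < Real.exp 1 := by
    have := Real.exp_one_gt_d9; linarith
  have he1 : Real.exp 1 - 1 ≠ 0 := by linarith
  have he0 : Real.exp 1 ≠ 0 := by linarith
  set x : ℝ := -(Real.exp 1 - 1)⁻¹ with hxdef
  have hxabs : |x| < 1 := by
    rw [hxdef, abs_neg, abs_inv, abs_of_pos (by linarith)]
    rw [inv_lt_one_iff₀]; right; linarith
  set f : ℕ → ℝ := fun k => (-t) ^ k / k.factorial * x ^ k with hf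
  set g : ℕ → ℝ := fun m => x ^ m with hg
  have hfe : ∀ k, f k = (-t * x) ^ k / k.factorial := by
    intro k; simp only [hf, mul_pow]; ring
  have hfnorm : Summable fun k => ‖f k‖ := by
    simp_rw [hfe]
    have h1 := Real.summable_pow_div_factorial (|(-t * x)|)
    exact h1.congr fun n => by
      rw [Real.norm_eq_abs, abs_div, Nat.abs_cast, abs_pow]
  have hgnorm : Summable fun m => ‖g m‖ := by
    have := summable_geometric_of_lt_one (abs_nonneg x) hxabs
    exact this.congr fun n => by rw [Real.norm_eq_abs, abs_pow]
  have hcauchy := tsum_mul_tsum_eq_tsum_sum_range_of_summable_norm hfnorm hgnorm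
  have hfsum : (∑' k, f k) = Real.exp (t / (Real.exp 1 - 1)) := by
    have : t / (Real.exp 1 - 1) = -t * x := by rw [hxdef]; ring
    rw [this, Real.exp_eq_exp_ℝ, NormedSpace.exp_eq_tsum_div]
    exact tsum_congr fun k => hfe k
  have hgsum : (∑' m, g m) = (1 - x)⁻¹ := tsum_geometric_of_norm_lt_one (by rwa [Real.norm_eq_abs])
  have hterm : ∀ n : ℕ, ((-1 : ℝ) ^ (n + 1) / (Real.exp 1 - 1) ^ (n + 1) *
      ∑ k ∈ Finset.range (n + 1), (-t) ^ k / k.factorial)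
      = x * ∑ k ∈ Finset.range (n + 1), f k * g (n - k) := by
    intro n
    have hx : ∀ m : ℕ, x ^ m = (-1 : ℝ) ^ m / (Real.exp 1 - 1) ^ m := by
      intro m
      rw [hxdef, show -(Real.exp 1 - 1)⁻¹ = (-1) / (Real.exp 1 - 1) by ring, div_pow]
    rw [Finset.mul_sum, Finset.mul_sum]
    refine Finset.sum_congr rfl fun k hk => ?_
    rw [Finset.mem_range] at hk
    have hnk : k + (n - k) = n := Nat.add_sub_cancel' (Nat.lt_succ_iff.mp hk)
    simp only [hf, hg]
    rw [show x * ((-t) ^ k / k.factorial * x ^ k * x ^ (n - k))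
        = (-t) ^ k / k.factorial * x ^ (k + (n - k) + 1) by ring, hnk, hx]
    ring
  rw [tsum_congr hterm, tsum_mul_left, ← hcauchy, hfsum, hgsum, hxdef]
  field_simp
  ring
end

section
/- If N : [0,∞) → ℝ is continuous and satisfies N(t) = 1 + (e^t/(e-1)) ∫_{t-1}^{t} N(s) e^{-s} ds for all t ≥ 1, then N is differentiable on (1,∞) and N'(t) = (e/(e-1))(N(t) - N(t-1)) - 1 for t > 1. -/
open MeasureTheory

theorem stmt_8 (N : ℝ → ℝ) (hcont : ContinuousOn N (Set.Ici 0))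
    (hN : ∀ t ≥ (1:ℝ), N t = 1 + (Real.exp t / (Real.exp 1 - 1)) *
      ∫ s in (t - 1)..t, N s * Real.exp (-s)) :
    ∀ t > (1:ℝ), HasDerivAt N
      ((Real.exp 1 / (Real.exp 1 - 1)) * (N t - N (t - 1)) - 1) t := by
  have he1 : (0:ℝ) < Real.exp 1 - 1 := by
    have := Real.add_one_lt_exp (x := 1) one_ne_zero
    linarith
  intro t ht
  set f : ℝ → ℝ := fun s => N s * Real.exp (-s) with hfdef
  have hfc : ContinuousOn f (Set.Ioi 0) :=
    (hcont.mono (Set.Ioi_subset_Ici le_rfl)).mul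
      ((Real.continuous_exp.comp continuous_neg).continuousOn)
  set c : ℝ := (t - 1) / 2 with hcdef
  have hc0 : 0 < c := by simp only [hcdef]; linarith
  have hct1 : c < t - 1 := by simp only [hcdef]; linarith
  have hint : ∀ u, c < u → IntervalIntegrable f volume c u := by
    intro u hu
    apply (hfc.mono ?_).intervalIntegrable
    intro x hx
    rcases Set.mem_uIcc.mp hx with h | h
    · exact lt_of_lt_of_le hc0 h.1
    · exact lt_of_lt_of_le hc0 (le_trans hu.le h.1)
  set g : ℝ → ℝ := fun u => ∫ s in c..u, f s with hgdef
  have hderiv : ∀ u, c < u → HasDerivAt g (f u) u := by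
    intro u hu
    have hu0 : 0 < u := lt_trans hc0 hu
    exact intervalIntegral.integral_hasDerivAt_right (hint u hu)
      (hfc.stronglyMeasurableAtFilter isOpen_Ioi u hu0)
      ((hfc u hu0).continuousAt (isOpen_Ioi.mem_nhds hu0))
  have hgt : HasDerivAt g (f t) t := hderiv t (by linarith)
  have hgt1 : HasDerivAt (fun u => g (u - 1)) (f (t - 1)) t := by
    have := (hderiv (t - 1) hct1).comp t ((hasDerivAt_id t).sub_const 1)
    exact this.congr_deriv (mul_one _)
  have hH : HasDerivAt (fun u => g u - g (u - 1)) (f t - f (t - 1)) t := hgt.sub hgt1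
  have hφ : HasDerivAt (fun u => 1 + (Real.exp u / (Real.exp 1 - 1)) * (g u - g (u - 1)))
      ((Real.exp t / (Real.exp 1 - 1)) * (g t - g (t - 1))
        + (Real.exp t / (Real.exp 1 - 1)) * (f t - f (t - 1))) t := by
    exact (HasDerivAt.const_add 1 (((Real.hasDerivAt_exp t).div_const _).mul hH))
  have hsub : ∀ u, c + 1 < u → (∫ s in (u - 1)..u, f s) = g u - g (u - 1) := by
    intro u hu
    rw [hgdef]
    exact (intervalIntegral.integral_interval_sub_left
      (hint u (by linarith)) (hint (u - 1) (by linarith))).symm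
  have heq : N =ᶠ[nhds t] fun u => 1 + (Real.exp u / (Real.exp 1 - 1)) * (g u - g (u - 1)) := by
    have hmem : Set.Ioi ((t + 1) / 2) ∈ nhds t :=
      isOpen_Ioi.mem_nhds (by simp; linarith)
    filter_upwards [hmem] with u hu
    have hu' : (t + 1) / 2 < u := hu
    have h1 : (1:ℝ) ≤ u := by linarith
    have h2 : c + 1 < u := by simp only [hcdef]; linarith
    rw [hN u h1, hsub u h2]
  have key := hφ.congr_of_eventuallyEq heq
  refine key.congr_deriv (Eq.symm ?_)
  have hNt := hN t ht.le
  rw [hsub t (by simp only [hcdef]; linarith)] at hNt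
  have hGt : (Real.exp t / (Real.exp 1 - 1)) * (g t - g (t - 1)) = N t - 1 := by linarith
  rw [hGt]
  have e1 : Real.exp t * Real.exp (-t) = 1 := by
    rw [← Real.exp_add]; simp
  have e2 : Real.exp t * Real.exp (-(t - 1)) = Real.exp 1 := by
    rw [← Real.exp_add]; ring_nf
  have e3 : Real.exp t * Real.exp (1 - t) = Real.exp 1 := by
    rw [← Real.exp_add]; ring_nf
  simp only [hfdef]
  field_simp
  linear_combination (-N t) * e1 + N (t - 1) * e2
end

section
/- Suppose N : [0,∞) → ℝ is continuous, N(t) = (e-1)/e + e^{t-1+t/(e-1)} for t ∈ [0,1], and N'(t) = (e/(e-1))(N(t)-N(t-1)) - 1 for t ∈ (1,2). Then N(t) = e^{(e/(e-1))t} · (-(e-1)/e^{2+1/(e-1)} + 1/e + e^{-e/(e-1)}/(e-1)) + 2(e-1)/e - (e^{-e/(e-1)} t e^{(e/(e-1))t})/(e-1) for t ∈ [1,2]. -/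
open Real Set

private lemma hE1 : (0:ℝ) < Real.exp 1 - 1 := by
  have := Real.exp_one_gt_d9; linarith

private lemma expkey (t : ℝ) :
    Real.exp 1 / (Real.exp 1 - 1) * Real.exp (t - 1 - 1 + (t - 1) / (Real.exp 1 - 1))
      = Real.exp (-(Real.exp 1 / (Real.exp 1 - 1))) / (Real.exp 1 - 1)
          * Real.exp (Real.exp 1 / (Real.exp 1 - 1) * t) := by
  have h1 : (Real.exp 1 - 1) ≠ 0 := ne_of_gt hE1
  rw [div_mul_eq_mul_div, div_mul_eq_mul_div, ← Real.exp_add, ← Real.exp_add]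
  congr 1
  field_simp
  ring

theorem stmt_10 (N : ℝ → ℝ) (hcont : ContinuousOn N (Set.Ici 0))
    (h01 : ∀ t ∈ Set.Icc (0:ℝ) 1,
      N t = (Real.exp 1 - 1) / Real.exp 1 + Real.exp (t - 1 + t / (Real.exp 1 - 1)))
    (hderiv : ∀ t ∈ Set.Ioo (1:ℝ) 2, HasDerivAt N
      ((Real.exp 1 / (Real.exp 1 - 1)) * (N t - N (t - 1)) - 1) t) :
    ∀ t ∈ Set.Icc (1:ℝ) 2,
      N t = Real.exp ((Real.exp 1 / (Real.exp 1 - 1)) * t) *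
          (-(Real.exp 1 - 1) / Real.exp (2 + 1 / (Real.exp 1 - 1)) + 1 / Real.exp 1
            + Real.exp (-(Real.exp 1 / (Real.exp 1 - 1))) / (Real.exp 1 - 1))
        + 2 * (Real.exp 1 - 1) / Real.exp 1
        - Real.exp (-(Real.exp 1 / (Real.exp 1 - 1))) * t *
            Real.exp ((Real.exp 1 / (Real.exp 1 - 1)) * t) / (Real.exp 1 - 1) := by
  have hE1 : (0:ℝ) < Real.exp 1 - 1 := hE1
  have hE1' : (Real.exp 1 - 1) ≠ 0 := ne_of_gt hE1
  have hE0 : Real.exp 1 ≠ 0 := Real.exp_ne_zero 1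
  set E : ℝ := Real.exp 1 with hE
  set a : ℝ := E / (E - 1) with ha_def
  have ha_pos : 0 < a := div_pos (Real.exp_pos 1) hE1
  set K0 : ℝ := -(E - 1) / Real.exp (2 + 1 / (E - 1)) + 1 / E + Real.exp (-a) / (E - 1)
    with hK0
  set F : ℝ → ℝ := fun t => Real.exp (a * t) * K0 + 2 * (E - 1) / E
      - Real.exp (-a) * t * Real.exp (a * t) / (E - 1) with hF
  -- the vector field
  set v : ℝ → ℝ → ℝ := fun t x => a * x - Real.exp (-a) / (E - 1) * Real.exp (a * t) - 2
    with hv_def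
  set K : NNReal := ⟨a, ha_pos.le⟩ with hK
  have hKa : (K : ℝ) = a := rfl
  have hv : ∀ t, LipschitzWith K (v t) := by
    intro t
    apply LipschitzWith.of_dist_le_mul
    intro x y
    rw [Real.dist_eq, Real.dist_eq, hKa]
    have : v t x - v t y = a * (x - y) := by simp only [hv_def]; ring
    rw [this, abs_mul, abs_of_pos ha_pos]
  -- derivative of N
  have hfA : ∀ t ∈ Ioo (1:ℝ) 2, HasDerivAt N (v t (N t)) t := by
    intro t ht
    have h := hderiv t ht
    have hmem : t - 1 ∈ Icc (0:ℝ) 1 := ⟨by linarith [ht.1], by linarith [ht.2]⟩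
    have hsub := h01 (t - 1) hmem
    convert h using 1
    rw [hsub]
    have key := expkey t
    have h1 : a * ((E - 1) / E) = 1 := by rw [ha_def]; field_simp
    simp only [hv_def]
    linear_combination key + h1
  -- derivative of F
  have hgA : ∀ t ∈ Ioo (1:ℝ) 2, HasDerivAt F (v t (F t)) t := by
    intro t _
    have d0 : HasDerivAt (fun s : ℝ => a * s) a t := by
      simpa using (hasDerivAt_id t).const_mul a
    have d1 : HasDerivAt (fun s : ℝ => Real.exp (a * s)) (Real.exp (a * t) * a) t := d0.exp
    have d2 : HasDerivAt (fun s : ℝ => Real.exp (-a) * s * Real.exp (a * s))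
        (Real.exp (-a) * Real.exp (a * t) + Real.exp (-a) * t * (Real.exp (a * t) * a)) t := by
      have := ((hasDerivAt_id t).const_mul (Real.exp (-a))).mul d1
      simp only [mul_one, id] at this
      exact this
    have d3 : HasDerivAt F
        (Real.exp (a * t) * a * K0
          - (Real.exp (-a) * Real.exp (a * t) + Real.exp (-a) * t * (Real.exp (a * t) * a))
              / (E - 1)) t := by
      exact ((d1.mul_const K0).add_const (2 * (E - 1) / E)).sub (d2.div_const (E - 1))
    convert d3 using 1
    have h1 : a * ((E - 1) / E) = 1 := by rw [ha_def]; field_simp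
    simp only [hv_def, hF]
    linear_combination (2:ℝ) * h1
  -- initial condition
  have hinit : N 1 = F 1 := by
    rw [h01 1 (by norm_num)]
    simp only [hF, hK0, mul_one]
    have e1 : a = 1 + 1 / (E - 1) := by rw [ha_def]; field_simp; ring
    rw [e1]
    rw [show (2:ℝ) + 1 / (E - 1) = 1 + (1 + 1 / (E - 1)) by ring]
    rw [Real.exp_add 1 (1 + 1 / (E - 1)), Real.exp_add 1 (1 / (E - 1)), Real.exp_neg]
    rw [show (1:ℝ) - 1 + 1 / (E - 1) = 1 / (E - 1) by ring]
    have hx : Real.exp (1 / (E - 1)) ≠ 0 := Real.exp_ne_zero _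
    rw [← hE]
    field_simp
    ring
  -- main Gronwall argument
  intro t ht
  have hgoal : N t = F t := by
    rcases eq_or_lt_of_le ht.1 with h1t | h1t
    · rw [← h1t]; exact hinit
    · -- t ∈ (1,2]
      have hcF : Continuous F := by fun_prop
      have key : ∀ s ∈ Ioo (1:ℝ) t, dist (N t) (F t) ≤ dist (N s) (F s) * Real.exp (K * 1) := by
        intro s hs
        have hst : s ≤ t := hs.2.le
        have hNc : ContinuousOn N (Icc s t) := hcont.mono (fun x hx => by
          simp only [mem_Ici]; have := hx.1; have := hs.1; simp only [mem_Icc] at hx; linarith [hx.1])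
        have hsub : Ico s t ⊆ Ioo (1:ℝ) 2 := fun x hx =>
          ⟨lt_of_lt_of_le hs.1 hx.1, lt_of_lt_of_le hx.2 ht.2⟩
        have hb := dist_le_of_trajectories_ODE hv hNc
          (fun u hu => (hfA u (hsub hu)).hasDerivWithinAt)
          (hcF.continuousOn)
          (fun u hu => (hgA u (hsub hu)).hasDerivWithinAt)
          (le_refl (dist (N s) (F s))) t ⟨hst, le_refl t⟩
        refine hb.trans ?_
        apply mul_le_mul_of_nonneg_left _ dist_nonneg
        apply Real.exp_le_exp.mpr
        have : t - s ≤ 1 := by linarith [hs.1, ht.2]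
        have hK0' : (0:ℝ) ≤ (K:ℝ) := ha_pos.le
        nlinarith
      have htend : Filter.Tendsto (fun s => dist (N s) (F s) * Real.exp (K * 1))
          (nhdsWithin 1 (Ioi 1)) (nhds (dist (N 1) (F 1) * Real.exp (K * 1))) := by
        have hsub : Ioi (1:ℝ) ⊆ Ici (0:ℝ) := fun x hx =>
          mem_Ici.mpr (le_of_lt (lt_trans zero_lt_one (mem_Ioi.mp hx)))
        have hN1 : ContinuousWithinAt N (Ioi (1:ℝ)) 1 :=
          (hcont 1 (by norm_num)).mono hsub
        have hF1 : ContinuousWithinAt F (Ioi (1:ℝ)) 1 := hcF.continuousWithinAt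
        exact (hN1.dist hF1).mul continuousWithinAt_const
      have hzero : dist (N 1) (F 1) * Real.exp (K * 1) = 0 := by
        rw [hinit, dist_self, zero_mul]
      rw [hzero] at htend
      have hev : ∀ᶠ s in nhdsWithin 1 (Ioi (1:ℝ)),
          dist (N t) (F t) ≤ dist (N s) (F s) * Real.exp (K * 1) := by
        filter_upwards [Ioo_mem_nhdsGT_of_mem (⟨le_refl (1:ℝ), h1t⟩ : (1:ℝ) ∈ Ico 1 t)]
          with s hs using key s hs
      have hle : dist (N t) (F t) ≤ 0 :=
        ge_of_tendsto htend hev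
      exact eq_of_dist_eq_zero (le_antisymm hle dist_nonneg)
  exact hgoal
end

section
/- The double integral identity: ∫_0^1 (e - e^u) · (1/(1 - (e^u-1)/(e-1))) · (∫_{(e^u-1)/(e-1)}^1 (ln(1+(e-1)x) - u) dx) du = (e-2)/2. -/
open Real intervalIntegral

lemma aux_inner (u : ℝ) (hu0 : 0 ≤ u) :
    ∫ x in ((Real.exp u - 1) / (Real.exp 1 - 1))..1,
        (Real.log (1 + (Real.exp 1 - 1) * x) - u)
      = (Real.exp u - u * Real.exp 1) / (Real.exp 1 - 1) := by
  set c : ℝ := Real.exp 1 - 1 with hc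
  have hc0 : 0 < c := by
    have := Real.exp_one_gt_d9
    simp only [hc]; linarith
  set a : ℝ := (Real.exp u - 1) / c with ha
  have ha0 : 0 ≤ a := by
    apply div_nonneg _ hc0.le
    have : (1:ℝ) ≤ Real.exp u := by
      simpa using Real.exp_le_exp.2 hu0
    linarith
  have hpos : ∀ x ∈ Set.uIcc a 1, 0 < 1 + c * x := by
    intro x hx
    have hxlb : min a 1 ≤ x := hx.1
    have h0x : 0 ≤ x := le_trans (le_min ha0 zero_le_one) hxlb
    nlinarith
  set F : ℝ → ℝ := fun x => ((1 + c * x) * Real.log (1 + c * x) - (1 + c * x)) / c - u * x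
    with hF
  have hderiv : ∀ x ∈ Set.uIcc a 1,
      HasDerivAt F (Real.log (1 + c * x) - u) x := by
    intro x hx
    have hp := hpos x hx
    have hd1 : HasDerivAt (fun x : ℝ => 1 + c * x) c x := by
      simpa using ((hasDerivAt_id x).const_mul c).const_add 1
    have hd2 := (Real.hasDerivAt_mul_log hp.ne').comp x hd1
    have hd3 := ((hd2.sub hd1).div_const c).sub ((hasDerivAt_id x).const_mul u)
    refine hd3.congr_deriv ?_
    field_simp [hc0.ne']
    ring
  have hcont : IntervalIntegrable (fun x => Real.log (1 + c * x) - u)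
      MeasureTheory.volume a 1 := by
    apply ContinuousOn.intervalIntegrable
    apply ContinuousOn.sub _ continuousOn_const
    exact Real.continuousOn_log.comp
      (continuousOn_const.add (continuousOn_const.mul continuousOn_id))
      (fun x hx => (hpos x hx).ne')
  rw [intervalIntegral.integral_eq_sub_of_hasDerivAt hderiv hcont]
  have hca : 1 + c * a = Real.exp u := by
    rw [ha]; field_simp; ring
  have hc1 : 1 + c * 1 = Real.exp 1 := by rw [hc]; ring
  simp only [hF, hca, hc1, Real.log_exp]
  rw [ha]
  field_simp
  ring

theorem stmt_17 :
    ∫ u in (0:ℝ)..1, (Real.exp 1 - Real.exp u) *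
        (1 / (1 - (Real.exp u - 1) / (Real.exp 1 - 1))) *
        ∫ x in ((Real.exp u - 1) / (Real.exp 1 - 1))..1,
          (Real.log (1 + (Real.exp 1 - 1) * x) - u)
      = (Real.exp 1 - 2) / 2 := by
  have hc0 : (0:ℝ) < Real.exp 1 - 1 := by
    have := Real.exp_one_gt_d9; linarith
  have hcongr : ∀ u ∈ Set.uIcc (0:ℝ) 1,
      (Real.exp 1 - Real.exp u) *
        (1 / (1 - (Real.exp u - 1) / (Real.exp 1 - 1))) *
        (∫ x in ((Real.exp u - 1) / (Real.exp 1 - 1))..1,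
          (Real.log (1 + (Real.exp 1 - 1) * x) - u))
      = Real.exp u - u * Real.exp 1 := by
    intro u hu
    rw [Set.uIcc_of_le zero_le_one] at hu
    obtain ⟨hu0, hu1⟩ := hu
    rw [aux_inner u hu0]
    have hone : 1 - (Real.exp u - 1) / (Real.exp 1 - 1)
        = (Real.exp 1 - Real.exp u) / (Real.exp 1 - 1) := by
      field_simp
      ring
    rw [hone]
    rcases eq_or_lt_of_le hu1 with h | h
    · subst h; simp
    · have hlt : Real.exp u < Real.exp 1 := Real.exp_lt_exp.2 h
      have hne : Real.exp 1 - Real.exp u ≠ 0 := by linarith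
      field_simp
  rw [intervalIntegral.integral_congr hcongr]
  have hsub : ∫ u in (0:ℝ)..1, (Real.exp u - u * Real.exp 1)
      = (∫ u in (0:ℝ)..1, Real.exp u) - (∫ u in (0:ℝ)..1, u) * Real.exp 1 := by
    rw [intervalIntegral.integral_sub (Real.continuous_exp.intervalIntegrable _ _)
      (Continuous.intervalIntegrable (by continuity) _ _),
      intervalIntegral.integral_mul_const]
  rw [hsub, integral_exp, integral_id]
  norm_num
  ring
end

section
/- For t ∈ [0,1] and n ≥ 1, the probability q_n(t) that the product of n i.i.d. uniform-[1,e] random variables is at most e^t equals (-1)^n (1 - b_n(t) e^t) / (e-1)^n, where b_n(t) = ∑_{k=0}^{n-1} (-t)^k / k!. -/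
open MeasureTheory Real Set intervalIntegral

noncomputable def gg (n : ℕ) (t : ℝ) : ℝ :=
  (-1) ^ n * (1 - (∑ k ∈ Finset.range n, (-t) ^ k / k.factorial) * Real.exp t)

lemma gg_cont (n : ℕ) : Continuous (gg n) := by
  unfold gg
  fun_prop

lemma gg_zero (t : ℝ) : gg 0 t = 1 := by simp [gg]

lemma keyint (n : ℕ) (t : ℝ) :
    ∫ x in (1:ℝ)..(Real.exp t), gg n (t - Real.log x) = gg (n+1) t := by
  have hsub : ∫ u in (0:ℝ)..t, Real.exp u • gg n (t - Real.log (Real.exp u))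
      = ∫ x in (Real.exp 0)..(Real.exp t), gg n (t - Real.log x) := by
    apply integral_comp_smul_deriv' (f := Real.exp) (f' := Real.exp)
      (g := fun x => gg n (t - Real.log x))
    · intro x _; exact Real.hasDerivAt_exp x
    · exact Real.continuous_exp.continuousOn
    · apply (gg_cont n).comp_continuousOn
      apply continuousOn_const.sub
      apply Real.continuousOn_log.mono
      rintro y ⟨u, _, rfl⟩
      exact ne_of_gt (Real.exp_pos u)
  rw [Real.exp_zero] at hsub
  rw [← hsub]
  have hcalc : ∫ u in (0:ℝ)..t, Real.exp u * gg n (t - u) = gg (n+1) t := by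
    have hderiv : ∀ u ∈ Set.uIcc (0:ℝ) t,
        HasDerivAt (fun u => (-1:ℝ)^n * (Real.exp u -
            Real.exp t * ∑ k ∈ Finset.range n, (u - t)^(k+1) / (k+1).factorial))
          (Real.exp u * gg n (t - u)) u := by
      intro u _
      have hsum : HasDerivAt (fun u => ∑ k ∈ Finset.range n, (u - t)^(k+1) / (k+1).factorial)
          (∑ k ∈ Finset.range n, (u - t)^k / k.factorial) u := by
        apply HasDerivAt.fun_sum
        intro k _
        have h1 : HasDerivAt (fun u : ℝ => (u - t)^(k+1))
            ((k+1 : ℕ) * (u - t)^k * 1) u :=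
          ((hasDerivAt_id u).sub_const t).pow (k+1)
        have h2 := h1.div_const (((k+1).factorial : ℕ) : ℝ)
        refine h2.congr_deriv ?_
        rw [Nat.factorial_succ]
        have hk : (k.factorial : ℝ) ≠ 0 := Nat.cast_ne_zero.2 k.factorial_ne_zero
        push_cast
        field_simp
      have := ((Real.hasDerivAt_exp u).sub ((hasDerivAt_const u (Real.exp t)).mul hsum)).const_mul
        ((-1:ℝ)^n)
      refine this.congr_deriv ?_
      unfold gg
      have hE : Real.exp (t - u) * Real.exp u = Real.exp t := by
        rw [← Real.exp_add]; ring_nf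
      have hterm : (∑ k ∈ Finset.range n, (-(t-u))^k / k.factorial)
          = ∑ k ∈ Finset.range n, (u - t)^k / k.factorial := by
        congr 1 with k
        congr 2
        ring
      rw [hterm, ← hE]
      ring
    have := intervalIntegral.integral_eq_sub_of_hasDerivAt hderiv ?_
    · rw [this]
      have h1 : ∀ k ∈ Finset.range n, ((t:ℝ) - t)^(k+1) / ((k+1).factorial : ℝ) = 0 := by
        intro k _; simp
      have h0 : ∑ k ∈ Finset.range n, ((0:ℝ) - t)^(k+1) / ((k+1).factorial : ℝ)
          = (∑ k ∈ Finset.range (n+1), (-t)^k / k.factorial) - 1 := by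
        rw [Finset.sum_range_succ' (fun k => (-t:ℝ)^k / k.factorial) n]
        simp only [pow_zero, Nat.factorial_zero, Nat.cast_one, div_one]
        rw [add_sub_cancel_right]
        congr 1 with k
        congr 2
        ring
      rw [Finset.sum_congr rfl h1, h0]
      simp only [Finset.sum_const_zero, mul_zero, Real.exp_zero, sub_zero]
      unfold gg
      rw [pow_succ]
      ring
    · apply Continuous.intervalIntegrable
      exact Real.continuous_exp.mul ((gg_cont n).comp (continuous_const.sub continuous_id))
  rw [← hcalc]
  congr 1 with u
  rw [Real.log_exp]
  simp [smul_eq_mul]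

lemma pi_restrict (n : ℕ) :
    Measure.pi (fun _ : Fin n => (volume : Measure ℝ).restrict (Set.Icc 1 (Real.exp 1)))
      = (Measure.pi fun _ : Fin n => (volume : Measure ℝ)).restrict
          (Set.pi Set.univ fun _ => Set.Icc 1 (Real.exp 1)) := by
  haveI : IsFiniteMeasure ((volume : Measure ℝ).restrict (Set.Icc 1 (Real.exp 1))) :=
    ⟨by rw [Measure.restrict_apply_univ]; exact measure_Icc_lt_top⟩
  apply Measure.pi_eq
  intro s hs
  rw [Measure.restrict_apply (MeasurableSet.univ_pi hs), ← Set.pi_inter_distrib,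
    Measure.pi_pi]
  simp [Measure.restrict_apply (hs _)]

lemma main_ind (n : ℕ) : ∀ t ∈ Set.Icc (0:ℝ) 1, 0 ≤ gg n t ∧
    (Measure.pi fun _ : Fin n => (volume : Measure ℝ).restrict (Set.Icc 1 (Real.exp 1)))
      {x : Fin n → ℝ | ∏ i, x i ≤ Real.exp t} = ENNReal.ofReal (gg n t) := by
  induction n with
  | zero =>
    intro t ht
    refine ⟨by rw [gg_zero]; norm_num, ?_⟩
    have : {x : Fin 0 → ℝ | ∏ i, x i ≤ Real.exp t} = Set.univ := by
      ext x; simp [Real.one_le_exp ht.1]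
    rw [this, gg_zero]
    simp [Measure.pi_univ]
  | succ n IH =>
    intro t ht
    have h1t : (1:ℝ) ≤ Real.exp t := Real.one_le_exp ht.1
    have hte : Real.exp t ≤ Real.exp 1 := Real.exp_le_exp.2 ht.2
    haveI : IsFiniteMeasure ((volume : Measure ℝ).restrict (Set.Icc 1 (Real.exp 1))) :=
      ⟨by rw [Measure.restrict_apply_univ]; exact measure_Icc_lt_top⟩
    set μ := (volume : Measure ℝ).restrict (Set.Icc 1 (Real.exp 1)) with hμ
    have hmem : ∀ x ∈ Set.Icc (1:ℝ) (Real.exp t), t - Real.log x ∈ Set.Icc (0:ℝ) 1 := by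
      intro x hx
      have hx0 : (0:ℝ) < x := lt_of_lt_of_le one_pos hx.1
      constructor
      · have : Real.log x ≤ t := (Real.log_le_iff_le_exp hx0).2 hx.2
        linarith
      · have : 0 ≤ Real.log x := Real.log_nonneg hx.1
        have := ht.2
        linarith
    have hnn : 0 ≤ gg (n+1) t := by
      rw [← keyint n t]
      apply intervalIntegral.integral_nonneg h1t
      intro x hx
      exact (IH _ (hmem x hx)).1
    refine ⟨hnn, ?_⟩
    set A : Set (ℝ × (Fin n → ℝ)) := {p | p.1 * ∏ i, p.2 i ≤ Real.exp t} with hA_def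
    have hA : MeasurableSet A := by
      apply measurableSet_le _ measurable_const
      exact measurable_fst.mul (Finset.measurable_prod _ fun i _ =>
        (measurable_pi_apply i).comp measurable_snd)
    have hmp := measurePreserving_piFinSuccAbove (fun _ : Fin (n+1) => μ) 0
    have hpre : (MeasurableEquiv.piFinSuccAbove (fun _ : Fin (n+1) => ℝ) 0) ⁻¹' A
        = {x : Fin (n+1) → ℝ | ∏ i, x i ≤ Real.exp t} := by
      ext x
      simp [hA_def, MeasurableEquiv.piFinSuccAbove, Fin.removeNth, Fin.succAbove_zero,
        Fin.prod_univ_succ, Fin.tail]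
    rw [← hpre, hmp.measure_preimage hA.nullMeasurableSet, Measure.prod_apply hA]
    have hcong : ∀ᵐ x ∂(volume : Measure ℝ), x ∈ Set.Icc (1:ℝ) (Real.exp 1) →
        Measure.pi (fun _ : Fin n => μ) (Prod.mk x ⁻¹' A)
          = ENNReal.ofReal (if x ≤ Real.exp t then gg n (t - Real.log x) else 0) := by
      refine Filter.Eventually.of_forall fun x hx => ?_
      have hx0 : (0:ℝ) < x := lt_of_lt_of_le one_pos hx.1
      by_cases hxe : x ≤ Real.exp t
      · have hpre2 : Prod.mk x ⁻¹' A
            = {y : Fin n → ℝ | ∏ i, y i ≤ Real.exp (t - Real.log x)} := by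
          ext y
          simp only [hA_def, Set.mem_preimage, Set.mem_setOf_eq]
          rw [Real.exp_sub, Real.exp_log hx0, mul_comm, ← le_div_iff₀ hx0]
        rw [hpre2, (IH _ (hmem x ⟨hx.1, hxe⟩)).2, if_pos hxe]
      · rw [if_neg hxe]
        have hbox : MeasurableSet (Set.pi Set.univ fun _ : Fin n => Set.Icc (1:ℝ) (Real.exp 1)) :=
          MeasurableSet.univ_pi fun _ => measurableSet_Icc
        rw [hμ, pi_restrict n, Measure.restrict_apply' hbox]
        have hempty : (Prod.mk x ⁻¹' A) ∩ (Set.pi Set.univ fun _ : Fin n =>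
            Set.Icc (1:ℝ) (Real.exp 1)) = ∅ := by
          ext y
          simp only [hA_def, Set.mem_inter_iff, Set.mem_preimage, Set.mem_setOf_eq,
            Set.mem_pi, Set.mem_univ, forall_true_left, Set.mem_empty_iff_false, iff_false,
            not_and]
          intro hy1 hy2
          have hp : (1:ℝ) ≤ ∏ i, y i := by
            calc (1:ℝ) = ∏ _i : Fin n, 1 := by simp
              _ ≤ ∏ i, y i := Finset.prod_le_prod (by intros; norm_num)
                  (fun i _ => (hy2 i).1)
          have : x ≤ x * ∏ i, y i := le_mul_of_one_le_right hx0.le hp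
          have := not_le.1 hxe
          linarith
        rw [hempty]
        simp
    rw [hμ]
    calc ∫⁻ x in Set.Icc (1:ℝ) (Real.exp 1), Measure.pi (fun _ : Fin n => μ) (Prod.mk x ⁻¹' A)
        = ∫⁻ x in Set.Icc (1:ℝ) (Real.exp 1),
            ENNReal.ofReal (if x ≤ Real.exp t then gg n (t - Real.log x) else 0) :=
          setLIntegral_congr_fun_ae measurableSet_Icc hcong
      _ = (∫⁻ x in Set.Icc (1:ℝ) (Real.exp t),
            ENNReal.ofReal (if x ≤ Real.exp t then gg n (t - Real.log x) else 0))
          + ∫⁻ x in Set.Ioc (Real.exp t) (Real.exp 1),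
            ENNReal.ofReal (if x ≤ Real.exp t then gg n (t - Real.log x) else 0) := by
          rw [← lintegral_union measurableSet_Ioc (by
            rw [Set.disjoint_left]; rintro x hx1 hx2; exact absurd hx1.2 (not_le.2 hx2.1)),
            Set.Icc_union_Ioc_eq_Icc h1t hte]
      _ = (∫⁻ x in Set.Icc (1:ℝ) (Real.exp t), ENNReal.ofReal (gg n (t - Real.log x))) + 0 := by
          congr 1
          · apply setLIntegral_congr_fun_ae measurableSet_Icc
            exact Filter.Eventually.of_forall fun x hx => by rw [if_pos hx.2]
          · rw [setLIntegral_congr_fun_ae measurableSet_Ioc (Filter.Eventually.of_forall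
              fun x hx => by rw [if_neg (not_le.2 hx.1)])]
            simp
      _ = ENNReal.ofReal (∫ x in Set.Icc (1:ℝ) (Real.exp t), gg n (t - Real.log x)) := by
          rw [add_zero]
          rw [← ofReal_integral_eq_lintegral_ofReal]
          · apply ContinuousOn.integrableOn_Icc
            apply (gg_cont n).comp_continuousOn
            apply continuousOn_const.sub
            apply Real.continuousOn_log.mono
            intro y hy
            exact ne_of_gt (lt_of_lt_of_le one_pos hy.1)
          · refine (ae_restrict_iff' measurableSet_Icc).2 (Filter.Eventually.of_forall
              fun x hx => ?_)
            exact (IH _ (hmem x hx)).1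
      _ = ENNReal.ofReal (gg (n+1) t) := by
          rw [MeasureTheory.integral_Icc_eq_integral_Ioc,
            ← intervalIntegral.integral_of_le h1t, keyint]

theorem stmt_19 (n : ℕ) (hn : 1 ≤ n) (t : ℝ) (ht : t ∈ Set.Icc (0:ℝ) 1) :
    Measure.pi (fun _ : Fin n =>
        (ENNReal.ofReal (Real.exp 1 - 1))⁻¹ • volume.restrict (Set.Icc 1 (Real.exp 1)))
      {x : Fin n → ℝ | ∏ i, x i ≤ Real.exp t}
      = ENNReal.ofReal ((-1) ^ n *
          (1 - (∑ k ∈ Finset.range n, (-t) ^ k / k.factorial) * Real.exp t) /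
          (Real.exp 1 - 1) ^ n) := by
  have he1 : (1:ℝ) < Real.exp 1 := by
    have := Real.exp_one_gt_d9
    linarith
  have he : (0:ℝ) < Real.exp 1 - 1 := by linarith
  set c : ENNReal := (ENNReal.ofReal (Real.exp 1 - 1))⁻¹ with hc
  set μ := (volume : Measure ℝ).restrict (Set.Icc 1 (Real.exp 1)) with hμ
  haveI : IsFiniteMeasure μ :=
    ⟨by rw [hμ, Measure.restrict_apply_univ]; exact measure_Icc_lt_top⟩
  haveI : IsFiniteMeasure (c • μ) := by
    constructor
    rw [Measure.smul_apply, smul_eq_mul]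
    exact ENNReal.mul_lt_top (by simp [hc, ENNReal.inv_lt_top, ENNReal.ofReal_pos.2 he])
      (measure_lt_top μ _)
  have hpismul : Measure.pi (fun _ : Fin n => c • μ) = c ^ n • Measure.pi (fun _ : Fin n => μ) := by
    apply Measure.pi_eq
    intro s hs
    simp only [Measure.smul_apply, smul_eq_mul, Measure.pi_pi]
    rw [Finset.prod_mul_distrib, Finset.prod_const, Finset.card_univ, Fintype.card_fin]
  rw [hpismul, Measure.smul_apply, (main_ind n t ht).2, smul_eq_mul]
  have hnum : (-1:ℝ) ^ n * (1 - (∑ k ∈ Finset.range n, (-t) ^ k / k.factorial) * Real.exp t)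
      = gg n t := rfl
  rw [hnum]
  rw [ENNReal.ofReal_div_of_pos (pow_pos he n), hc, ENNReal.ofReal_pow he.le,
    ENNReal.div_eq_inv_mul, ENNReal.inv_pow]
end
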